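/- An n×n distance matrix D has a realization by a weighted n-cycle if and only if there exists a cyclic permutation π of {1,…,n} (i.e., a permutation consisting of a single n-cycle) such that for every i ∈ {1,…,n} and every s ∈ {1,…,n-1}, D(i, π^s(i)) = min( Σ_{t=0}^{s-1} D(π^t(i), π^{t+1}(i)), Σ_{t=s}^{n-1} D(π^t(i), π^{t+1}(i)) ). -/

import Mathlib

noncomputable def walkWeight {V : Type*} {G : SimpleGraph V} (w : V → V → ℝ) {u v : V}
    (p : G.Walk u v) : ℝ := (p.darts.map (fun d => w d.fst d.snd)).sum

noncomputable def gdist {V : Type*} (G : SimpleGraph V) (w : V → V → ℝ) (u v : V) : ℝ :=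
  sInf {x | ∃ p : G.Walk u v, x = walkWeight w p}

def IsDistanceMatrix {n : ℕ} (D : Fin n → Fin n → ℝ) : Prop :=
  (∀ i j, D i j = D j i) ∧ (∀ i, D i i = 0) ∧ (∀ i j, 0 ≤ D i j) ∧
    (∀ i j k, D i j ≤ D i k + D k j)

def Ematrix {n : ℕ} (i : Fin n) : Fin n → Fin n → ℝ :=
  fun j k => if (j = i ∧ k ≠ i) ∨ (j ≠ i ∧ k = i) then 1 else 0

noncomputable def compaction {n : ℕ} (D : Fin n → Fin n → ℝ) (i : Fin n) : ℝ :=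
  (1/2) * sInf {x | ∃ p r : Fin n, p ≠ i ∧ r ≠ i ∧ x = D p i + D i r - D p r}

/-! Lift the cycle to the circle `ℝ / Tℤ`, where `T` is the total weight of a nonnegative edge
labelling `b`: the vertex `σ^s i` goes to the arc sum of the first `s` labels. Each edge moves the
image by at most its label, so when labels are at most the weights, every walk weighs at least the
circle distance between the images of its endpoints, i.e. the shorter of the two arcs; walking
forward or backward along the cycle attains this when `b` is the weight itself. For a realization,
the labels `D(x, σx)` are at most the weights, and the triangle inequality bounds `D` by both arcs;
conversely, the weights `D(x, πx)` realize `D`. -/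

open Finset

section WalkWeight

variable {V : Type*} {G : SimpleGraph V} (w : V → V → ℝ)

@[simp]
lemma walkWeight_nil (u : V) : walkWeight w (.nil : G.Walk u u) = 0 := by
  simp [walkWeight]

@[simp]
lemma walkWeight_cons {u v x : V} (h : G.Adj u v) (p : G.Walk v x) :
    walkWeight w (.cons h p) = w u v + walkWeight w p := by
  simp [walkWeight]

@[simp]
lemma walkWeight_concat {u v x : V} (p : G.Walk u v) (h : G.Adj v x) :
    walkWeight w (p.concat h) = walkWeight w p + w v x := by
  simp [walkWeight, SimpleGraph.Walk.darts_concat]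

@[simp]
lemma walkWeight_copy {u v u' v' : V} (p : G.Walk u v) (hu : u = u') (hv : v = v') :
    walkWeight w (p.copy hu hv) = walkWeight w p := by
  subst hu hv
  rfl

lemma walkWeight_reverse (hw : ∀ u v, G.Adj u v → w v u = w u v) {u v : V} (p : G.Walk u v) :
    walkWeight w p.reverse = walkWeight w p := by
  simp only [walkWeight, SimpleGraph.Walk.darts_reverse, List.map_reverse, List.sum_reverse,
    List.map_map]
  exact congrArg List.sum (List.map_congr_left fun d _ => hw _ _ d.adj)

lemma walkWeight_nonneg (hw : ∀ u v, 0 ≤ w u v) {u v : V} (p : G.Walk u v) :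
    0 ≤ walkWeight w p :=
  List.sum_nonneg (by simp [hw])

lemma dist_le_walkWeight {M : Type*} [PseudoMetricSpace M] {f : V → M}
    (hf : ∀ u v, G.Adj u v → dist (f u) (f v) ≤ w u v) {u v : V} (p : G.Walk u v) :
    dist (f u) (f v) ≤ walkWeight w p := by
  induction p with
  | nil => simp
  | cons h p ih =>
    rw [walkWeight_cons]
    exact (dist_triangle _ _ _).trans (add_le_add (hf _ _ h) ih)

lemma gdist_le_walkWeight (hw : ∀ u v, 0 ≤ w u v) {u v : V} (p : G.Walk u v) :
    gdist G w u v ≤ walkWeight w p :=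
  csInf_le ⟨0, by rintro _ ⟨q, rfl⟩; exact walkWeight_nonneg w hw q⟩ ⟨p, rfl⟩

lemma dist_le_gdist {M : Type*} [PseudoMetricSpace M] {f : V → M}
    (hf : ∀ u v, G.Adj u v → dist (f u) (f v) ≤ w u v) {u v : V} (h : G.Reachable u v) :
    dist (f u) (f v) ≤ gdist G w u v :=
  le_csInf (h.elim fun p => ⟨_, p, rfl⟩)
    (by rintro _ ⟨p, rfl⟩; exact dist_le_walkWeight w hf p)

end WalkWeight

lemma AddCircle.norm_coe_eq_min {p x : ℝ} (hx : 0 ≤ x) (hxp : x ≤ p) :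
    ‖(x : AddCircle p)‖ = min x (p - x) := by
  rcases hxp.lt_or_eq with hxp | rfl
  · have hp : p ≠ 0 := by linarith
    have habs : |p| / 2 = p / 2 := by rw [abs_of_pos (by linarith)]
    rcases le_total x (p / 2) with hx2 | hx2
    · rw [(norm_coe_eq_abs_iff p hp).2 (by rw [habs, abs_of_nonneg hx]; linarith),
        abs_of_nonneg hx, min_eq_left (by linarith)]
    · rw [← sub_add_cancel x p, coe_add_period, (norm_coe_eq_abs_iff p hp).2
        (by rw [habs, abs_of_neg (by linarith)]; linarith), abs_of_neg (by linarith),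
        min_eq_right (by linarith)]
      ring
  · simp [coe_period, hx]

section CyclicPerm

variable {n : ℕ} {σ : Equiv.Perm (Fin n)}

lemma Equiv.Perm.isCycleOn_univ_of_exists_pow_apply_eq (h : ∀ x y, ∃ t : ℕ, (σ ^ t) x = y) :
    σ.IsCycleOn .univ :=
  ⟨Set.bijOn_univ.2 σ.bijective, fun x _ y _ =>
    let ⟨t, ht⟩ := h x y
    ⟨t, by rwa [zpow_natCast]⟩⟩

lemma Equiv.Perm.IsCycleOn.exists_pow_apply_eq_univ (hσ : σ.IsCycleOn .univ) (x y : Fin n) :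
    ∃ t < n, (σ ^ t) x = y := by
  simpa using (show σ.IsCycleOn (univ : Finset (Fin n)) by simpa).exists_pow_eq (mem_univ x)
    (mem_univ y)

lemma Equiv.Perm.IsCycleOn.pow_apply_eq_pow_apply_univ (hσ : σ.IsCycleOn .univ) {x : Fin n}
    {a c : ℕ} : (σ ^ a) x = (σ ^ c) x ↔ a ≡ c [MOD n] := by
  simpa using (show σ.IsCycleOn (univ : Finset (Fin n)) by simpa).pow_apply_eq_pow_apply
    (mem_univ x) (m := a) (n := c)

lemma Equiv.Perm.IsCycleOn.pow_card_univ (hσ : σ.IsCycleOn .univ) : σ ^ n = 1 :=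
  Equiv.ext fun x => by
    simpa using (hσ.pow_apply_eq_pow_apply_univ (x := x) (c := 0)).2
      (Nat.modEq_zero_iff_dvd.2 dvd_rfl)

lemma Equiv.Perm.IsCycleOn.pow_apply_ne_self_univ (hσ : σ.IsCycleOn .univ) {t : ℕ}
    (ht : 0 < t) (htn : t < n) (x : Fin n) : (σ ^ t) x ≠ x := by
  intro h
  have := (hσ.pow_apply_eq_pow_apply_univ (c := 0)).1 (by simpa using h)
  rw [Nat.ModEq, Nat.zero_mod, Nat.mod_eq_of_lt htn] at this
  omega

lemma Equiv.Perm.IsCycleOn.apply_ne_self_univ (hσ : σ.IsCycleOn .univ) (hn : 2 ≤ n)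
    (x : Fin n) : σ x ≠ x := by
  simpa using hσ.pow_apply_ne_self_univ one_pos hn x

lemma Equiv.Perm.IsCycleOn.apply_apply_ne_self_univ (hσ : σ.IsCycleOn .univ) (hn : 3 ≤ n)
    (x : Fin n) : σ (σ x) ≠ x := by
  simpa [pow_two] using hσ.pow_apply_ne_self_univ two_pos hn x

end CyclicPerm

section PermGraph

variable {n : ℕ} {σ : Equiv.Perm (Fin n)} {w : Fin n → ℝ}

variable (σ) in
def permGraph : SimpleGraph (Fin n) := SimpleGraph.fromRel fun u v => v = σ u

variable (σ w) in
def permWeight (u v : Fin n) : ℝ := if v = σ u then w u else if u = σ v then w v else 0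

variable (σ w) in
def arcSum (i : Fin n) (s : ℕ) : ℝ := ∑ t ∈ range s, w ((σ ^ t) i)

lemma permGraph_adj_apply (hσ : ∀ x, σ x ≠ x) (x : Fin n) : (permGraph σ).Adj x (σ x) := by
  simp [permGraph, SimpleGraph.fromRel_adj, (hσ x).symm]

lemma permWeight_apply_self (x : Fin n) : permWeight σ w x (σ x) = w x := if_pos rfl

lemma permWeight_nonneg (hw : ∀ x, 0 ≤ w x) (u v : Fin n) : 0 ≤ permWeight σ w u v := by
  unfold permWeight
  split_ifs <;> simp [hw]

lemma permWeight_comm (hσ : ∀ x, σ (σ x) ≠ x) {u v : Fin n} (h : (permGraph σ).Adj u v) :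
    permWeight σ w v u = permWeight σ w u v := by
  obtain ⟨-, rfl | rfl⟩ := (SimpleGraph.fromRel_adj _ _ _).1 h <;>
    simp [permWeight, (hσ _).symm]

@[simp]
lemma arcSum_zero (i : Fin n) : arcSum σ w i 0 = 0 := sum_range_zero _

lemma arcSum_succ (i : Fin n) (s : ℕ) :
    arcSum σ w i (s + 1) = arcSum σ w i s + w ((σ ^ s) i) :=
  sum_range_succ _ _

lemma arcSum_add (i : Fin n) (a c : ℕ) :
    arcSum σ w i (a + c) = arcSum σ w i a + arcSum σ w ((σ ^ a) i) c := by
  simp only [arcSum, sum_range_add, ← Equiv.Perm.mul_apply, ← pow_add, add_comm]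

lemma arcSum_nonneg (hw : ∀ x, 0 ≤ w x) (i : Fin n) (s : ℕ) : 0 ≤ arcSum σ w i s :=
  sum_nonneg fun _ _ => hw _

lemma arcSum_le_arcSum (hw : ∀ x, 0 ≤ w x) (i : Fin n) {s m : ℕ} (h : s ≤ m) :
    arcSum σ w i s ≤ arcSum σ w i m := by
  obtain ⟨c, rfl⟩ := Nat.exists_eq_add_of_le h
  linarith [arcSum_add (σ := σ) (w := w) i s c, arcSum_nonneg (σ := σ) hw ((σ ^ s) i) c]

lemma exists_walk_walkWeight_eq_arcSum (hσ : ∀ x, σ x ≠ x) (i : Fin n) (s : ℕ) :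
    ∃ p : (permGraph σ).Walk i ((σ ^ s) i),
      walkWeight (permWeight σ w) p = arcSum σ w i s := by
  induction s with
  | zero => exact ⟨SimpleGraph.Walk.nil.copy rfl (by simp), by simp⟩
  | succ s ih =>
    obtain ⟨p, hp⟩ := ih
    refine ⟨(p.concat (permGraph_adj_apply hσ _)).copy rfl
      (by rw [pow_succ', Equiv.Perm.mul_apply]), ?_⟩
    rw [walkWeight_copy, walkWeight_concat, hp, permWeight_apply_self, arcSum_succ]

end PermGraph

section Realization

variable {n : ℕ} {σ : Equiv.Perm (Fin n)} {w : Fin n → ℝ}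

lemma gdist_le_arcSum (hσ : σ.IsCycleOn .univ) (hn : 2 ≤ n) (hw : ∀ x, 0 ≤ w x) (i : Fin n)
    (s : ℕ) : gdist (permGraph σ) (permWeight σ w) i ((σ ^ s) i) ≤ arcSum σ w i s := by
  obtain ⟨p, hp⟩ := exists_walk_walkWeight_eq_arcSum (w := w) (hσ.apply_ne_self_univ hn) i s
  exact hp ▸ gdist_le_walkWeight _ (permWeight_nonneg hw) p

lemma pow_card_sub_apply_pow_apply (hσ : σ.IsCycleOn .univ) {s : ℕ} (hs : s ≤ n) (i : Fin n) :
    (σ ^ (n - s)) ((σ ^ s) i) = i := by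
  rw [← Equiv.Perm.mul_apply, ← pow_add, Nat.sub_add_cancel hs, hσ.pow_card_univ,
    Equiv.Perm.one_apply]

lemma arcSum_pow_apply_card_sub {s : ℕ} (hs : s ≤ n) (i : Fin n) :
    arcSum σ w ((σ ^ s) i) (n - s) = arcSum σ w i n - arcSum σ w i s := by
  rw [eq_sub_iff_add_eq', ← arcSum_add, Nat.add_sub_cancel' hs]

lemma gdist_le_arcSum_card_sub (hσ : σ.IsCycleOn .univ) (hn : 3 ≤ n) (hw : ∀ x, 0 ≤ w x)
    (i : Fin n) {s : ℕ} (hs : s ≤ n) :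
    gdist (permGraph σ) (permWeight σ w) i ((σ ^ s) i) ≤
      arcSum σ w i n - arcSum σ w i s := by
  obtain ⟨p, hp⟩ := exists_walk_walkWeight_eq_arcSum (w := w)
    (hσ.apply_ne_self_univ (by omega)) ((σ ^ s) i) (n - s)
  have hrev : walkWeight (permWeight σ w)
      (p.reverse.copy (pow_card_sub_apply_pow_apply hσ hs i) rfl) =
        arcSum σ w ((σ ^ s) i) (n - s) := by
    rw [walkWeight_copy, walkWeight_reverse _
      (fun _ _ h => permWeight_comm (hσ.apply_apply_ne_self_univ hn) h), hp]
  rw [← arcSum_pow_apply_card_sub hs, ← hrev]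
  exact gdist_le_walkWeight _ (permWeight_nonneg hw) _

lemma coe_arcSum_card_mul_add (hσ : σ.IsCycleOn .univ) (b : Fin n → ℝ) (i : Fin n)
    (q r : ℕ) :
    (arcSum σ b i (n * q + r) : AddCircle (arcSum σ b i n)) = arcSum σ b i r := by
  induction q with
  | zero => simp
  | succ q ih =>
    rw [mul_add_one, add_right_comm, add_comm, arcSum_add, hσ.pow_card_univ,
      Equiv.Perm.one_apply, add_comm, AddCircle.coe_add_period, ih]

lemma coe_arcSum_eq_of_pow_apply_eq (hσ : σ.IsCycleOn .univ) (b : Fin n → ℝ) {i : Fin n}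
    {a c : ℕ} (h : (σ ^ a) i = (σ ^ c) i) :
    (arcSum σ b i a : AddCircle (arcSum σ b i n)) = arcSum σ b i c := by
  rw [← Nat.div_add_mod a n, ← Nat.div_add_mod c n, coe_arcSum_card_mul_add hσ,
    coe_arcSum_card_mul_add hσ, hσ.pow_apply_eq_pow_apply_univ.1 h]

lemma exists_lift_arcSum (hσ : σ.IsCycleOn .univ) (b : Fin n → ℝ) (i : Fin n) :
    ∃ f : Fin n → AddCircle (arcSum σ b i n), ∀ a, f ((σ ^ a) i) = arcSum σ b i a := by
  choose pos _ hpos using hσ.exists_pow_apply_eq_univ i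
  exact ⟨fun x => arcSum σ b i (pos x), fun a => coe_arcSum_eq_of_pow_apply_eq hσ b (hpos _)⟩

lemma min_arcSum_le_gdist (hσ : σ.IsCycleOn .univ) (hn : 2 ≤ n) {b : Fin n → ℝ}
    (hb : ∀ x, 0 ≤ b x) (hbw : ∀ x, b x ≤ w x) (i : Fin n) {s : ℕ} (hs : s ≤ n) :
    min (arcSum σ b i s) (arcSum σ b i n - arcSum σ b i s) ≤
      gdist (permGraph σ) (permWeight σ w) i ((σ ^ s) i) := by
  obtain ⟨f, hf⟩ := exists_lift_arcSum hσ b i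
  have hstep (x : Fin n) : dist (f x) (f (σ x)) ≤ w x := by
    obtain ⟨a, -, rfl⟩ := hσ.exists_pow_apply_eq_univ i x
    rw [← Equiv.Perm.mul_apply, ← pow_succ', hf, hf, arcSum_succ, dist_comm, dist_eq_norm,
      ← AddCircle.coe_sub, add_sub_cancel_left]
    exact QuotientAddGroup.norm_mk_le_norm.trans
      ((Real.norm_of_nonneg (hb _)).trans_le (hbw _))
  have hadj (u v : Fin n) (h : (permGraph σ).Adj u v) :
      dist (f u) (f v) ≤ permWeight σ w u v := by
    unfold permWeight
    split_ifs with h₁ h₂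
    · exact h₁ ▸ hstep u
    · exact h₂ ▸ dist_comm (f v) (f (σ v)) ▸ hstep v
    · simp [permGraph, h₁, h₂] at h
  have hreach : (permGraph σ).Reachable i ((σ ^ s) i) :=
    ⟨(exists_walk_walkWeight_eq_arcSum (w := w) (hσ.apply_ne_self_univ hn) i s).choose⟩
  calc min (arcSum σ b i s) (arcSum σ b i n - arcSum σ b i s)
      = dist (f i) (f ((σ ^ s) i)) := by
        rw [dist_comm, dist_eq_norm, hf, show f i = 0 by simpa using hf 0, sub_zero,
          AddCircle.norm_coe_eq_min (arcSum_nonneg hb i s) (arcSum_le_arcSum hb i hs)]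
    _ ≤ _ := dist_le_gdist _ hadj hreach

lemma gdist_permGraph_pow_apply (hσ : σ.IsCycleOn .univ) (hn : 3 ≤ n) (hw : ∀ x, 0 ≤ w x)
    (i : Fin n) {s : ℕ} (hs : s ≤ n) :
    gdist (permGraph σ) (permWeight σ w) i ((σ ^ s) i) =
      min (arcSum σ w i s) (arcSum σ w i n - arcSum σ w i s) :=
  le_antisymm
    (le_min (gdist_le_arcSum hσ (by omega) hw i s) (gdist_le_arcSum_card_sub hσ hn hw i hs))
    (min_arcSum_le_gdist hσ (by omega) hw (fun _ => le_rfl) i hs)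

end Realization

namespace IsDistanceMatrix

variable {n : ℕ} {D : Fin n → Fin n → ℝ}

lemma le_arcSum (hD : IsDistanceMatrix D) (σ : Equiv.Perm (Fin n)) (i : Fin n) (s : ℕ) :
    D i ((σ ^ s) i) ≤ arcSum σ (fun x => D x (σ x)) i s := by
  induction s with
  | zero => simp [hD.2.1]
  | succ s ih =>
    rw [arcSum_succ, pow_succ', Equiv.Perm.mul_apply]
    linarith [hD.2.2.2 i (σ ((σ ^ s) i)) ((σ ^ s) i)]

lemma le_min_arcSum (hD : IsDistanceMatrix D) {σ : Equiv.Perm (Fin n)} (hσ : σ.IsCycleOn .univ)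
    (i : Fin n) {s : ℕ} (hs : s ≤ n) :
    D i ((σ ^ s) i) ≤ min (arcSum σ (fun x => D x (σ x)) i s)
      (arcSum σ (fun x => D x (σ x)) i n - arcSum σ (fun x => D x (σ x)) i s) := by
  refine le_min (hD.le_arcSum σ i s) ?_
  have := hD.le_arcSum σ ((σ ^ s) i) (n - s)
  rwa [pow_card_sub_apply_pow_apply hσ hs, arcSum_pow_apply_card_sub hs, hD.1] at this

end IsDistanceMatrix

/-- A distance matrix has a realization by a weighted `n`-cycle iff there is a cyclic
permutation `π` such that `D(i, π^s(i))` is the minimum of the two arc sums, for all `i`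
and `1 ≤ s ≤ n-1`. -/
theorem stmt4 {n : ℕ} (hn : 3 ≤ n) (D : Fin n → Fin n → ℝ) (hD : IsDistanceMatrix D) :
    (∃ (σ : Equiv.Perm (Fin n)) (w : Fin n → ℝ),
        (∀ x y : Fin n, ∃ t : ℕ, (σ ^ t) x = y) ∧ (∀ x, 0 ≤ w x) ∧
        (∀ i j : Fin n,
          gdist (SimpleGraph.fromRel (fun u v : Fin n => v = σ u))
            (fun u v => if v = σ u then w u else if u = σ v then w v else 0) i j = D i j)) ↔
    (∃ π : Equiv.Perm (Fin n),
        (∀ x y : Fin n, ∃ t : ℕ, (π ^ t) x = y) ∧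
        ∀ (i : Fin n) (s : ℕ), 1 ≤ s → s ≤ n - 1 →
          D i ((π ^ s) i) =
            min (∑ t ∈ Finset.range s, D ((π ^ t) i) ((π ^ (t + 1)) i))
                (∑ t ∈ Finset.Ico s n, D ((π ^ t) i) ((π ^ (t + 1)) i))) := by
  have hD₀ (π : Equiv.Perm (Fin n)) (x : Fin n) : 0 ≤ D x (π x) := hD.2.2.1 _ _
  have hsum_range (π : Equiv.Perm (Fin n)) (i : Fin n) (s : ℕ) :
      ∑ t ∈ range s, D ((π ^ t) i) ((π ^ (t + 1)) i) = arcSum π (fun x => D x (π x)) i s :=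
    sum_congr rfl fun t _ => by rw [pow_succ', Equiv.Perm.mul_apply]
  have hsum_Ico (π : Equiv.Perm (Fin n)) (i : Fin n) {s : ℕ} (hs : s ≤ n) :
      ∑ t ∈ Ico s n, D ((π ^ t) i) ((π ^ (t + 1)) i) =
        arcSum π (fun x => D x (π x)) i n - arcSum π (fun x => D x (π x)) i s := by
    rw [sum_Ico_eq_sub _ hs, hsum_range, hsum_range]
  constructor
  · rintro ⟨σ, w, hcyc, hw, hreal⟩
    have hσ := Equiv.Perm.isCycleOn_univ_of_exists_pow_apply_eq hcyc
    change ∀ i j, gdist (permGraph σ) (permWeight σ w) i j = D i j at hreal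
    have hDw (x : Fin n) : D x (σ x) ≤ w x := by
      simpa [hreal, arcSum] using gdist_le_arcSum hσ (by omega) hw x 1
    refine ⟨σ, hcyc, fun i s _ hs => ?_⟩
    rw [hsum_range, hsum_Ico σ i (by omega)]
    refine le_antisymm (hD.le_min_arcSum hσ i (by omega)) ?_
    rw [← hreal]
    exact min_arcSum_le_gdist hσ (by omega) (hD₀ σ) hDw i (by omega)
  · rintro ⟨π, hcyc, hmin⟩
    have hσ := Equiv.Perm.isCycleOn_univ_of_exists_pow_apply_eq hcyc
    refine ⟨π, fun x => D x (π x), hcyc, hD₀ π, fun i j => ?_⟩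
    obtain ⟨s, hs, rfl⟩ := hσ.exists_pow_apply_eq_univ i j
    change gdist (permGraph π) (permWeight π _) _ _ = _
    rw [gdist_permGraph_pow_apply hσ hn (hD₀ π) i hs.le]
    rcases Nat.eq_zero_or_pos s with rfl | hs₀
    · simp [hD.2.1, arcSum_nonneg (hD₀ π)]
    · rw [hmin i s hs₀ (by omega), hsum_range, hsum_Ico π i hs.le]
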